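/- arXiv:1901.00623 — 3 statements merged into one kernel-verified Lean document; each statement's English description precedes it below -/
import Mathlib

section
/- Let a_1 > ... > a_{m+1}, b_1 > ... > b_m, c_1 > ... > c_m, d_1 > ... > d_m be strictly decreasing sequences of natural numbers satisfying a_i > d_i, d_i ≥ a_{i+1}, c_i ≥ b_i, b_i > c_{i+1} for all applicable i, and additionally a_i ≥ b_i and b_i ≥ a_{i+1}, and c_i ≥ d_i and d_i ≥ c_{i+1}. Fix k with 2 ≤ k ≤ m and assume b_{k-1} > a_k. Define a' of length m by a'_i = a_i − 1 for i < k and a'_i = d_i for k ≤ i ≤ m, and b' of length m−1 by b'_i = b_i − 1 for i < k and b'_i = c_{i+1} for k ≤ i ≤ m−1. Then a' and b' are strictly decreasing, a'_i ≥ b'_i for 1 ≤ i ≤ m−1, and b'_i ≥ a'_{i+1} for 1 ≤ i ≤ m−1. -/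
/-!
Both new rows are spliced at position `k` from a decremented head of `Z` and a tail of `Z'`.
Away from the splice every inequality is inherited from one of the two symbols; truncated
decrementing still preserves strict order, since each decremented entry exceeds some other entry
and so is positive. At the splice the decrement is absorbed by a strict
inequality: `a_{k-1} - 1 ≥ a_k > d_k`, `b_{k-1} - 1 ≥ c_k > c_{k+1}` and, for the mixed condition,
`b_{k-1} - 1 ≥ a_k > d_k`.
-/

def splice {α : Type*} (k : ℕ) (f g : ℕ → α) (i : ℕ) : α :=
  if i < k then f i else g i

section Splice

variable {α : Type*} {k i : ℕ} {f g f' g' : ℕ → α} {r : α → α → Prop}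

theorem splice_rel_splice (head : i < k → r (f i) (f' i)) (tail : k ≤ i → r (g i) (g' i)) :
    r (splice k f g i) (splice k f' g' i) := by
  unfold splice
  split_ifs with h
  exacts [head h, tail (not_lt.mp h)]

theorem splice_rel_splice_succ (head : i + 1 < k → r (f i) (f' (i + 1)))
    (junction : i + 1 = k → r (f i) (g' (i + 1))) (tail : k ≤ i → r (g i) (g' (i + 1))) :
    r (splice k f g i) (splice k f' g' (i + 1)) := by
  unfold splice
  split_ifs with h₁ h₂ h₂
  · exact head h₂
  · exact junction (by omega)
  · omega
  · exact tail (not_lt.mp h₁)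

end Splice

theorem stmt_8_general (m k : ℕ) (a b c d a' b' : ℕ → ℕ)
    (ha : ∀ i, 1 ≤ i → i ≤ m → a i > a (i + 1))
    (hb : ∀ i, 1 ≤ i → i ≤ m - 1 → b i > b (i + 1))
    (hc : ∀ i, 1 ≤ i → i ≤ m - 1 → c i > c (i + 1))
    (hd : ∀ i, 1 ≤ i → i ≤ m - 1 → d i > d (i + 1))
    (had : ∀ i, 1 ≤ i → i ≤ m → a i > d i)
    (hbc : ∀ i, 1 ≤ i → i ≤ m - 1 → b i > c (i + 1))
    (hab : ∀ i, 1 ≤ i → i ≤ m → a i ≥ b i)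
    (hba : ∀ i, 1 ≤ i → i ≤ m → b i ≥ a (i + 1))
    (hcd : ∀ i, 1 ≤ i → i ≤ m → c i ≥ d i)
    (hdc : ∀ i, 1 ≤ i → i ≤ m - 1 → d i ≥ c (i + 1))
    (hbka : b (k - 1) > a k)
    (ha' : ∀ i, 1 ≤ i → i ≤ m → a' i = if i < k then a i - 1 else d i)
    (hb' : ∀ i, 1 ≤ i → i ≤ m - 1 → b' i = if i < k then b i - 1 else c (i + 1)) :
    (∀ i, 1 ≤ i → i ≤ m - 1 → a' i > a' (i + 1)) ∧
    (∀ i, 1 ≤ i → i ≤ m - 2 → b' i > b' (i + 1)) ∧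
    (∀ i, 1 ≤ i → i ≤ m - 1 → a' i ≥ b' i) ∧
    (∀ i, 1 ≤ i → i ≤ m - 1 → b' i ≥ a' (i + 1)) := by
  have ha'' : ∀ i, 1 ≤ i → i ≤ m → a' i = splice k (a · - 1) d i := ha'
  have hb'' : ∀ i, 1 ≤ i → i ≤ m - 1 → b' i = splice k (b · - 1) (c <| · + 1) i := hb'
  refine ⟨fun i h₁ h₂ => ?_, fun i h₁ h₂ => ?_, fun i h₁ h₂ => ?_, fun i h₁ h₂ => ?_⟩
  · have hdec := ha i h₁ (by omega)
    have hpos := had (i + 1) (by omega) (by omega)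
    rw [ha'' i h₁ (by omega), ha'' (i + 1) (by omega) (by omega)]
    refine splice_rel_splice_succ (r := GT.gt) (fun _ => ?_) (fun _ => ?_) (fun _ => hd i h₁ h₂)
    · exact Nat.sub_lt_sub_right (Nat.one_le_of_lt hpos) hdec
    · exact hpos.trans_le (Nat.le_sub_one_of_lt hdec)
  · have hc' := hc (i + 1) (by omega) (by omega)
    rw [hb'' i h₁ (by omega), hb'' (i + 1) (by omega) (by omega)]
    refine splice_rel_splice_succ (r := GT.gt) (fun _ => ?_) (fun _ => ?_) (fun _ => hc')
    · exact Nat.sub_lt_sub_right (Nat.one_le_of_lt (hbc (i + 1) (by omega) (by omega)))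
        (hb i h₁ (by omega))
    · exact hc'.trans_le (Nat.le_sub_one_of_lt (hbc i h₁ (by omega)))
  · rw [ha'' i h₁ (by omega), hb'' i h₁ h₂]
    exact splice_rel_splice (r := GE.ge) (fun _ => Nat.sub_le_sub_right (hab i h₁ (by omega)) 1)
      (fun _ => hdc i h₁ h₂)
  · rw [hb'' i h₁ h₂, ha'' (i + 1) (by omega) (by omega)]
    refine splice_rel_splice_succ (r := GE.ge)
      (fun _ => Nat.sub_le_sub_right (hba i h₁ (by omega)) 1) (fun hik => ?_)
      (fun _ => hcd (i + 1) (by omega) (by omega))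
    subst hik
    exact Nat.le_sub_one_of_lt ((had (i + 1) (by omega) (by omega)).trans hbka)

theorem stmt_8 (m k : ℕ) (hm : 1 ≤ m) (a b c d a' b' : ℕ → ℕ)
    (ha : ∀ i, 1 ≤ i → i ≤ m → a i > a (i + 1))
    (hb : ∀ i, 1 ≤ i → i ≤ m - 1 → b i > b (i + 1))
    (hc : ∀ i, 1 ≤ i → i ≤ m - 1 → c i > c (i + 1))
    (hd : ∀ i, 1 ≤ i → i ≤ m - 1 → d i > d (i + 1))
    (had : ∀ i, 1 ≤ i → i ≤ m → a i > d i)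
    (hda : ∀ i, 1 ≤ i → i ≤ m → d i ≥ a (i + 1))
    (hcb : ∀ i, 1 ≤ i → i ≤ m → c i ≥ b i)
    (hbc : ∀ i, 1 ≤ i → i ≤ m - 1 → b i > c (i + 1))
    (hab : ∀ i, 1 ≤ i → i ≤ m → a i ≥ b i)
    (hba : ∀ i, 1 ≤ i → i ≤ m → b i ≥ a (i + 1))
    (hcd : ∀ i, 1 ≤ i → i ≤ m → c i ≥ d i)
    (hdc : ∀ i, 1 ≤ i → i ≤ m - 1 → d i ≥ c (i + 1))
    (hk1 : 2 ≤ k) (hk2 : k ≤ m) (hbka : b (k - 1) > a k)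
    (ha' : ∀ i, 1 ≤ i → i ≤ m → a' i = if i < k then a i - 1 else d i)
    (hb' : ∀ i, 1 ≤ i → i ≤ m - 1 → b' i = if i < k then b i - 1 else c (i + 1)) :
    (∀ i, 1 ≤ i → i ≤ m - 1 → a' i > a' (i + 1)) ∧
    (∀ i, 1 ≤ i → i ≤ m - 2 → b' i > b' (i + 1)) ∧
    (∀ i, 1 ≤ i → i ≤ m - 1 → a' i ≥ b' i) ∧
    (∀ i, 1 ≤ i → i ≤ m - 1 → b' i ≥ a' (i + 1)) :=
  stmt_8_general m k a b c d a' b' ha hb hc hd had hbc hab hba hcd hdc hbka ha' hb'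
end

section
/- Let a_1 > ... > a_{m+1}, b_1 > ... > b_m, c_1 > ... > c_m, d_1 > ... > d_m be strictly decreasing sequences of natural numbers satisfying a_i > d_i, d_i ≥ a_{i+1}, c_i ≥ b_i, b_i > c_{i+1} for all applicable i, and also a_i ≥ b_i ≥ a_{i+1} and c_i ≥ d_i ≥ c_{i+1}. Fix k with 2 ≤ k ≤ m and assume a_{k-1} > b_{k-1}. Define a' of length m by a'_i = a_i − 1 for i < k and a'_i = d_i for k ≤ i ≤ m, and b' of length m−1 by b'_i = b_i − 1 for i < k−1 and b'_i = c_{i+1} for k−1 ≤ i ≤ m−1. Then a' and b' are strictly decreasing, a'_i ≥ b'_i for all 1 ≤ i ≤ m−1, and b'_i ≥ a'_{i+1} for all 1 ≤ i ≤ m−1. -/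
theorem stmt_9 (m k : ℕ) (hm : 1 ≤ m) (a b c d a' b' : ℕ → ℕ)
    (ha : ∀ i, 1 ≤ i → i ≤ m → a i > a (i + 1))
    (hb : ∀ i, 1 ≤ i → i ≤ m - 1 → b i > b (i + 1))
    (hc : ∀ i, 1 ≤ i → i ≤ m - 1 → c i > c (i + 1))
    (hd : ∀ i, 1 ≤ i → i ≤ m - 1 → d i > d (i + 1))
    (had : ∀ i, 1 ≤ i → i ≤ m → a i > d i)
    (hda : ∀ i, 1 ≤ i → i ≤ m → d i ≥ a (i + 1))
    (hcb : ∀ i, 1 ≤ i → i ≤ m → c i ≥ b i)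
    (hbc : ∀ i, 1 ≤ i → i ≤ m - 1 → b i > c (i + 1))
    (hab : ∀ i, 1 ≤ i → i ≤ m → a i ≥ b i)
    (hba : ∀ i, 1 ≤ i → i ≤ m → b i ≥ a (i + 1))
    (hcd : ∀ i, 1 ≤ i → i ≤ m → c i ≥ d i)
    (hdc : ∀ i, 1 ≤ i → i ≤ m - 1 → d i ≥ c (i + 1))
    (hk1 : 2 ≤ k) (hk2 : k ≤ m) (hakb : a (k - 1) > b (k - 1))
    (ha' : ∀ i, 1 ≤ i → i ≤ m → a' i = if i < k then a i - 1 else d i)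
    (hb' : ∀ i, 1 ≤ i → i ≤ m - 1 → b' i = if i < k - 1 then b i - 1 else c (i + 1)) :
    (∀ i, 1 ≤ i → i ≤ m - 1 → a' i > a' (i + 1)) ∧
    (∀ i, 1 ≤ i → i ≤ m - 2 → b' i > b' (i + 1)) ∧
    (∀ i, 1 ≤ i → i ≤ m - 1 → a' i ≥ b' i) ∧
    (∀ i, 1 ≤ i → i ≤ m - 1 → b' i ≥ a' (i + 1)) := by
  refine ⟨?_, ?_, ?_, ?_⟩
  · intro i h1 h2
    rw [ha' i h1 (by omega), ha' (i + 1) (by omega) (by omega)]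
    split_ifs with p q q
    · have H1 := ha i h1 (by omega)
      have H2 := had (i + 1) (by omega) (by omega)
      omega
    · -- i < k, i + 1 = k
      have hke : k = i + 1 := by omega
      subst hke
      simp only [Nat.add_sub_cancel] at hakb
      have H1 := hbc i h1 (by omega)
      have H2 := hcd (i + 1) (by omega) (by omega)
      omega
    · omega
    · exact hd i h1 h2
  · intro i h1 h2
    rw [hb' i h1 (by omega), hb' (i + 1) (by omega) (by omega)]
    split_ifs with p q q
    · have H1 := hb i h1 (by omega)
      have H2 := hbc (i + 1) (by omega) (by omega)
      omega
    · -- i + 1 = k - 1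
      have hke : k = i + 2 := by omega
      subst hke
      have H1 := hb i h1 (by omega)
      have H2 := hbc (i + 1) (by omega) (by omega)
      omega
    · omega
    · exact hc (i + 1) (by omega) (by omega)
  · intro i h1 h2
    rw [ha' i h1 (by omega), hb' i h1 h2]
    split_ifs with p q q
    · have H1 := hab i h1 (by omega)
      omega
    · -- i = k - 1
      have hke : k = i + 1 := by omega
      subst hke
      simp only [Nat.add_sub_cancel] at hakb
      have H1 := hbc i h1 h2
      omega
    · omega
    · exact hdc i h1 h2
  · intro i h1 h2
    rw [hb' i h1 h2, ha' (i + 1) (by omega) (by omega)]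
    split_ifs with p q q
    · have H1 := hba i h1 (by omega)
      omega
    · omega
    · omega
    · exact hcd (i + 1) (by omega) (by omega)
end

section
/- Let a_1 > ... > a_{m+1}, b_1 > ... > b_m, c_1 > ... > c_{m+1}, d_1 > ... > d_{m+1} be strictly decreasing sequences of natural numbers satisfying a_i ≥ d_i, d_i > a_{i+1}, c_i > b_i, b_i ≥ c_{i+1} for all applicable i, and also a_i ≥ b_i ≥ a_{i+1} and c_i ≥ d_i ≥ c_{i+1}. Fix k with 2 ≤ k ≤ m+1. Define a' of length m+1 by a'_i = a_i for i ≤ k and a'_i = d_i for k < i ≤ m+1, and b' of length m by b'_i = b_i for i ≤ k−1 and b'_i = c_{i+1} for k−1 < i ≤ m. Then a' and b' are strictly decreasing, a'_i ≥ b'_i for 1 ≤ i ≤ m, and b'_i ≥ a'_{i+1} for 1 ≤ i ≤ m. -/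
theorem stmt_11 (m k : ℕ) (hm : 1 ≤ m) (a b c d a' b' : ℕ → ℕ)
    (ha : ∀ i, 1 ≤ i → i ≤ m → a i > a (i + 1))
    (hb : ∀ i, 1 ≤ i → i ≤ m - 1 → b i > b (i + 1))
    (hc : ∀ i, 1 ≤ i → i ≤ m → c i > c (i + 1))
    (hd : ∀ i, 1 ≤ i → i ≤ m → d i > d (i + 1))
    (had : ∀ i, 1 ≤ i → i ≤ m + 1 → a i ≥ d i)
    (hda : ∀ i, 1 ≤ i → i ≤ m → d i > a (i + 1))
    (hcb : ∀ i, 1 ≤ i → i ≤ m → c i > b i)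
    (hbc : ∀ i, 1 ≤ i → i ≤ m → b i ≥ c (i + 1))
    (hab : ∀ i, 1 ≤ i → i ≤ m → a i ≥ b i)
    (hba : ∀ i, 1 ≤ i → i ≤ m → b i ≥ a (i + 1))
    (hcd : ∀ i, 1 ≤ i → i ≤ m + 1 → c i ≥ d i)
    (hdc : ∀ i, 1 ≤ i → i ≤ m → d i ≥ c (i + 1))
    (hk1 : 2 ≤ k) (hk2 : k ≤ m + 1)
    (ha' : ∀ i, 1 ≤ i → i ≤ m + 1 → a' i = if i ≤ k then a i else d i)
    (hb' : ∀ i, 1 ≤ i → i ≤ m → b' i = if i ≤ k - 1 then b i else c (i + 1)) :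
    (∀ i, 1 ≤ i → i ≤ m → a' i > a' (i + 1)) ∧
    (∀ i, 1 ≤ i → i ≤ m - 1 → b' i > b' (i + 1)) ∧
    (∀ i, 1 ≤ i → i ≤ m → a' i ≥ b' i) ∧
    (∀ i, 1 ≤ i → i ≤ m → b' i ≥ a' (i + 1)) := by
  refine ⟨?_, ?_, ?_, ?_⟩
  · intro i h1 h2
    rw [ha' i h1 (by omega), ha' (i+1) (by omega) (by omega)]
    split_ifs with hA hB hB
    · exact ha i h1 h2
    · have : i = k := by omega
      subst this
      exact lt_of_lt_of_le (hd i h1 h2) (had i h1 (by omega))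
    · omega
    · exact hd i h1 h2
  · intro i h1 h2
    rw [hb' i h1 (by omega), hb' (i+1) (by omega) (by omega)]
    split_ifs with hA hB hB
    · exact hb i h1 h2
    · have : i + 1 = k := by omega
      calc b i ≥ c (i+1) := hbc i h1 (by omega)
        _ > c (i+1+1) := hc (i+1) (by omega) (by omega)
    · omega
    · exact hc (i+1) (by omega) (by omega)
  · intro i h1 h2
    rw [ha' i h1 (by omega), hb' i h1 h2]
    split_ifs with hA hB hB
    · exact hab i h1 h2
    · exact le_trans (hbc i h1 h2) (hab i h1 h2)
    · omega
    · exact hdc i h1 h2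
  · intro i h1 h2
    rw [hb' i h1 h2, ha' (i+1) (by omega) (by omega)]
    split_ifs with hA hB hB
    · exact hba i h1 h2
    · omega
    · omega
    · exact hcd (i+1) (by omega) (by omega)
end
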